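/- For nonnegative integers k, r, t, x with t ≤ r, the identity C_q(x,t)·C_q(k−x, r−t) = ∑_{i=t}^{r} (−1)^{i−t} q^{(i−t)(k−x−r+t)+binom(i−t+1,2)} C_q(i,t) C_q(k−i, r−i) C_q(x,i) holds. -/

import Mathlib

/-!
Trinomial revision `C(x,i) C(i,t) = C(x,t) C(x-t,i-t)` pulls `C(x,t)` out of every term; after the
shift `i = t + j` what remains is the alternating q-Vandermonde identity
`∑_{j ≤ s} (-1)^j q^(j(n-m-s) + binom(j+1,2)) C(m,j) C(n-j,s-j) = C(n-m,s)`
with `m = x-t`, `n = k-t`, `s = r-t`. It holds for every integer `m`: at `m = 0` only `j = 0`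
contributes, and the left side is invariant under `(m,n) ↦ (m+1,n+1)`, because q-Pascal applied to
both binomials of the sum for `(m+1,n)` yields the sum for `(m,n-1)` plus a telescoping sum.
-/

/-- The Gaussian binomial coefficient `C_q(a,k)`, extended to integer arguments,
with value `0` when `k < 0`. -/
noncomputable def gbinom (q : ℝ) (a k : ℤ) : ℝ :=
  if k < 0 then 0
  else ∏ i ∈ Finset.range k.toNat, (q ^ (a - k + i + 1) - 1) / (q ^ ((i : ℤ) + 1) - 1)

open Finset

noncomputable def gbinomNum (q : ℝ) (a : ℤ) (n : ℕ) : ℝ :=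
  ∏ i ∈ range n, (q ^ (a - n + i + 1) - 1)

noncomputable def gbinomDen (q : ℝ) (n : ℕ) : ℝ :=
  ∏ i ∈ range n, (q ^ ((i : ℤ) + 1) - 1)

section GaussianBinomial

variable (q : ℝ)

lemma gbinomNum_one (a : ℤ) : gbinomNum q a 1 = q ^ a - 1 := by
  simp [gbinomNum]

lemma gbinomNum_add (a : ℤ) (u t : ℕ) :
    gbinomNum q a (u + t) = gbinomNum q (a - t) u * gbinomNum q a t := by
  rw [gbinomNum, prod_range_add, gbinomNum, gbinomNum]
  congr 1 <;> refine prod_congr rfl fun i _ => ?_ <;> congr 2 <;> push_cast <;> ring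

lemma gbinomDen_add (u t : ℕ) :
    gbinomDen q (u + t) = gbinomDen q u * gbinomNum q (u + t : ℕ) t := by
  rw [gbinomDen, prod_range_add, gbinomNum]
  congr 1
  refine prod_congr rfl fun i _ => ?_
  congr 2
  push_cast
  ring

lemma gbinom_natCast_right (a : ℤ) (n : ℕ) :
    gbinom q a n = gbinomNum q a n / gbinomDen q n := by
  rw [gbinom, if_neg (by omega), Int.toNat_natCast, gbinomNum, gbinomDen, prod_div_distrib]

lemma gbinom_of_neg (a : ℤ) {b : ℤ} (h : b < 0) : gbinom q a b = 0 := by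
  rw [gbinom, if_pos h]

lemma gbinom_zero_right (a : ℤ) : gbinom q a 0 = 1 := by
  simp [gbinom]

lemma gbinom_eq_zero_of_lt {a : ℤ} {n : ℕ} (ha : 0 ≤ a) (h : a < n) : gbinom q a n = 0 := by
  rw [gbinom_natCast_right, gbinomNum,
    prod_eq_zero (mem_range.2 (show (n - a - 1).toNat < n by omega)), zero_div]
  rw [show a - n + ((n - a - 1).toNat : ℕ) + 1 = 0 by omega, zpow_zero, sub_self]

end GaussianBinomial

noncomputable def vandermondeTerm (q : ℝ) (m n : ℤ) (s j : ℕ) : ℝ :=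
  (-1) ^ j * q ^ ((j : ℤ) * (n - m - s) + ((j + 1).choose 2 : ℤ)) *
    gbinom q m j * gbinom q (n - j) ((s : ℤ) - j)

noncomputable def vandermondeTelescoper (q : ℝ) (m n : ℤ) (s j : ℕ) : ℝ :=
  (-1) ^ j * q ^ ((j : ℤ) * (n - m - 1 - s) + (j.choose 2 : ℤ) + m + 1) *
    gbinom q m ((j : ℤ) - 1) * gbinom q (n - j) ((s : ℤ) - j)

section NotRootOfUnity

variable {q : ℝ}

lemma zpow_sub_one_ne_zero_of_pos (hq : ∀ n : ℕ, q ^ (n + 1) ≠ 1) {z : ℤ} (hz : 0 < z) :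
    q ^ z - 1 ≠ 0 := by
  obtain ⟨n, rfl⟩ : ∃ n : ℕ, z = (n + 1 : ℕ) := ⟨z.toNat - 1, by omega⟩
  rw [zpow_natCast, sub_ne_zero]
  exact hq n

lemma gbinomDen_ne_zero (hq : ∀ n : ℕ, q ^ (n + 1) ≠ 1) (n : ℕ) : gbinomDen q n ≠ 0 :=
  prod_ne_zero_iff.2 fun _ _ => zpow_sub_one_ne_zero_of_pos hq (by omega)

lemma gbinomNum_ne_zero (hq : ∀ n : ℕ, q ^ (n + 1) ≠ 1) {a : ℤ} {n : ℕ} (h : n ≤ a) :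
    gbinomNum q a n ≠ 0 :=
  prod_ne_zero_iff.2 fun _ _ => zpow_sub_one_ne_zero_of_pos hq (by omega)

lemma gbinom_pascal (hq₀ : q ≠ 0) (hq : ∀ n : ℕ, q ^ (n + 1) ≠ 1) (a : ℤ) {b : ℤ}
    (hb : 0 ≤ b) :
    gbinom q a b = gbinom q (a - 1) b + q ^ (a - b) * gbinom q (a - 1) (b - 1) := by
  lift b to ℕ using hb
  cases b with
  | zero => simp [gbinom_zero_right, gbinom_of_neg]
  | succ n =>
    have hnum : gbinomNum q a (n + 1) = gbinomNum q (a - 1) n * (q ^ a - 1) := by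
      rw [gbinomNum_add, gbinomNum_one, Nat.cast_one]
    have hnum' : gbinomNum q (a - 1) (n + 1) = (q ^ (a - 1 - n) - 1) * gbinomNum q (a - 1) n := by
      rw [add_comm, gbinomNum_add, gbinomNum_one]
    have hden : gbinomDen q (n + 1) = gbinomDen q n * (q ^ ((n : ℤ) + 1) - 1) := by
      rw [gbinomDen_add, gbinomNum_one, Nat.cast_add, Nat.cast_one]
    have hq_pow : q ^ a = q ^ (a - 1 - n) * q ^ ((n : ℤ) + 1) := by
      rw [← zpow_add₀ hq₀]; ring_nf
    have h₁ := zpow_sub_one_ne_zero_of_pos hq (z := (n : ℤ) + 1) (by omega)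
    have h₂ := gbinomDen_ne_zero hq n
    rw [show ((n + 1 : ℕ) : ℤ) - 1 = n by push_cast; ring,
      show a - ((n + 1 : ℕ) : ℤ) = a - 1 - n by push_cast; ring]
    simp only [gbinom_natCast_right]
    rw [hnum, hnum', hden, hq_pow]
    field_simp
    ring

lemma gbinom_mul_gbinom (hq : ∀ n : ℕ, q ^ (n + 1) ≠ 1) (a : ℤ) (t u : ℕ) :
    gbinom q a (t + u : ℕ) * gbinom q (t + u : ℕ) t = gbinom q a t * gbinom q (a - t) u := by
  simp only [gbinom_natCast_right]
  rw [add_comm t u, gbinomNum_add, gbinomDen_add]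
  have h₁ := gbinomNum_ne_zero hq (a := (u + t : ℕ)) (n := t) (by omega)
  have h₂ := gbinomDen_ne_zero hq u
  have h₃ := gbinomDen_ne_zero hq t
  field_simp

lemma vandermondeTerm_succ_left (hq₀ : q ≠ 0) (hq : ∀ n : ℕ, q ^ (n + 1) ≠ 1) (m n : ℤ) {s j : ℕ}
    (hj : j ≤ s) :
    vandermondeTerm q (m + 1) n s j = vandermondeTerm q m (n - 1) s j +
      (vandermondeTelescoper q m n s j - vandermondeTelescoper q m n s (j + 1)) := by
  set E : ℤ := (j : ℤ) * (n - m - 1 - s) + ((j + 1).choose 2 : ℤ)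
  have hchoose : ((j + 1).choose 2 : ℤ) = (j.choose 2 : ℤ) + j := by
    rw [Nat.choose_succ_succ', Nat.choose_one_right]; push_cast; ring
  have hpow : q ^ ((j : ℤ) * (n - m - 1 - s) + (j.choose 2 : ℤ) + m + 1) =
      q ^ E * q ^ (m + 1 - j) := by
    rw [← zpow_add₀ hq₀]; congr 1; simp only [E, hchoose]; ring
  have hpow' : q ^ (((j + 1 : ℕ) : ℤ) * (n - m - 1 - s) + ((j + 1).choose 2 : ℤ) + m + 1) =
      q ^ E * q ^ (n - s) := by
    rw [← zpow_add₀ hq₀]; congr 1; simp only [E]; push_cast; ring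
  have hleft := gbinom_pascal hq₀ hq (m + 1) (b := j) (by omega)
  have hright := gbinom_pascal hq₀ hq (n - j) (b := (s : ℤ) - j) (by omega)
  rw [add_sub_cancel_right] at hleft
  rw [show n - j - (s - j) = n - s by ring] at hright
  simp only [vandermondeTerm, vandermondeTelescoper, hpow, hpow', hleft, hright, E]
  push_cast
  ring_nf

lemma sum_vandermondeTerm_succ_left (hq₀ : q ≠ 0) (hq : ∀ n : ℕ, q ^ (n + 1) ≠ 1)
    (m n : ℤ) (s : ℕ) :
    ∑ j ∈ range (s + 1), vandermondeTerm q (m + 1) n s j =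
      ∑ j ∈ range (s + 1), vandermondeTerm q m (n - 1) s j := by
  rw [sum_congr rfl fun j hj =>
      vandermondeTerm_succ_left hq₀ hq m n (Nat.lt_succ_iff.1 (mem_range.1 hj)),
    sum_add_distrib, sum_range_sub']
  simp [vandermondeTelescoper, gbinom_of_neg]

lemma sum_vandermondeTerm (hq₀ : q ≠ 0) (hq : ∀ n : ℕ, q ^ (n + 1) ≠ 1) (m n : ℤ) (s : ℕ) :
    ∑ j ∈ range (s + 1), vandermondeTerm q m n s j = gbinom q (n - m) s := by
  induction m using Int.induction_on generalizing n with
  | zero =>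
    rw [sum_eq_single 0 (fun j _ hj => by simp [vandermondeTerm, gbinom_eq_zero_of_lt q le_rfl
      (show (0 : ℤ) < j by omega)]) (by simp)]
    simp [vandermondeTerm, gbinom_zero_right]
  | succ i ih =>
    rw [sum_vandermondeTerm_succ_left hq₀ hq, ih]
    ring_nf
  | pred i ih =>
    have h := sum_vandermondeTerm_succ_left hq₀ hq (-i - 1) (n + 1) s
    rw [sub_add_cancel, add_sub_cancel_right, ih] at h
    rw [← h]
    ring_nf

end NotRootOfUnity

theorem stmt13 (q : ℝ) (hq : 1 < q) (k r t x : ℕ) (htr : t ≤ r) :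
    gbinom q x t * gbinom q ((k : ℤ) - x) ((r : ℤ) - t) =
      ∑ i ∈ Finset.Icc t r,
        (-1 : ℝ) ^ (i - t) *
          q ^ (((i : ℤ) - t) * ((k : ℤ) - x - r + t) + ((i - t + 1).choose 2 : ℤ)) *
          gbinom q i t * gbinom q ((k : ℤ) - i) ((r : ℤ) - i) * gbinom q x i := by
  have hq₀ : q ≠ 0 := by positivity
  have hq₁ : ∀ n : ℕ, q ^ (n + 1) ≠ 1 := fun n => (one_lt_pow₀ hq n.succ_ne_zero).ne'
  obtain ⟨s, rfl⟩ := Nat.exists_eq_add_of_le htr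
  have hsum := sum_vandermondeTerm hq₀ hq₁ (x - t) (k - t) s
  rw [show (k : ℤ) - t - (x - t) = k - x by ring] at hsum
  rw [← Ico_add_one_right_eq_Icc, sum_Ico_eq_sum_range, show t + s + 1 - t = s + 1 by omega,
    show ((t + s : ℕ) : ℤ) - t = s by push_cast; ring, ← hsum, mul_sum]
  refine sum_congr rfl fun j _ => ?_
  have htri := gbinom_mul_gbinom hq₁ x t j
  rw [vandermondeTerm, Nat.add_sub_cancel_left]
  push_cast at htri ⊢
  ring_nf at htri ⊢
  rw [htri]
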